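/- arXiv:2509.08236 — 4 statements merged into one kernel-verified Lean document; each statement's English description precedes it below -/
import Mathlib

section
/- Let x̄ be an n×m real matrix of normalized evaluations (n ≥ 2 alternatives, m ≥ 1 criteria) and let w_1, …, w_m > 0 be weights. Define the per-criterion dominance d_j(s,t) = (w_j·(s−t))^{0.88} if s > t, 0 if s = t, and −2.25·w_j·(t−s)^{0.88} if s < t; the total dominance D_{i,k} = Σ_{j=1}^m d_j(x̄^j_i, x̄^j_k); and the score ŝ_i = Σ_{k=1}^n D_{i,k}. If alternative i1 weakly Pareto dominates alternative i2, i.e. x̄^j_{i1} ≥ x̄^j_{i2} for every criterion j, then ŝ_{i1} ≥ ŝ_{i2}. -/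
/-!
Each per-criterion dominance `d_j(·, t)` is nondecreasing in its first argument: gains
`(w (s - t))^α` grow and losses `-θ w (t - s)^α` shrink as `s` increases, and both branches
meet at `0` when `s = t` since `α > 0`. Summing these termwise inequalities over criteria
and rivals compares the scores.
-/

open Set Finset

/-- `d s t` is the TODIM dominance of evaluation `s` over `t` on a criterion of weight `w`;
the paper fixes the loss factor `θ = 2.25` and the exponent `α = 0.88`. -/
structure IsTodimDominance (d : ℝ → ℝ → ℝ) (w θ α : ℝ) : Prop where
  gain : ∀ s t, t < s → d s t = (w * (s - t)) ^ α
  diag : ∀ s, d s s = 0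
  loss : ∀ s t, s < t → d s t = -θ * w * (t - s) ^ α

namespace IsTodimDominance

variable {d : ℝ → ℝ → ℝ} {w θ α s t : ℝ}

lemma eq_of_le (hd : IsTodimDominance d w θ α) (hα : 0 < α) (h : t ≤ s) :
    d s t = (w * (s - t)) ^ α := by
  rcases h.lt_or_eq with h | rfl
  · exact hd.gain s t h
  · rw [hd.diag, sub_self, mul_zero, Real.zero_rpow hα.ne']

lemma eq_of_ge (hd : IsTodimDominance d w θ α) (hα : 0 < α) (h : s ≤ t) :
    d s t = -θ * w * (t - s) ^ α := by
  rcases h.lt_or_eq with h | rfl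
  · exact hd.loss s t h
  · rw [hd.diag, sub_self, Real.zero_rpow hα.ne', mul_zero]

lemma monotoneOn_Ici (hd : IsTodimDominance d w θ α) (hw : 0 ≤ w) (hα : 0 < α) :
    MonotoneOn (d · t) (Ici t) := by
  intro s₁ (h₁ : t ≤ s₁) s₂ (h₂ : t ≤ s₂) h₁₂
  simp only [hd.eq_of_le hα h₁, hd.eq_of_le hα h₂]
  exact Real.rpow_le_rpow (mul_nonneg hw (sub_nonneg.2 h₁)) (by gcongr) hα.le

lemma monotoneOn_Iic (hd : IsTodimDominance d w θ α) (hw : 0 ≤ w) (hθ : 0 ≤ θ)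
    (hα : 0 < α) : MonotoneOn (d · t) (Iic t) := by
  intro s₁ (h₁ : s₁ ≤ t) s₂ (h₂ : s₂ ≤ t) h₁₂
  simp only [hd.eq_of_ge hα h₁, hd.eq_of_ge hα h₂, neg_mul, neg_le_neg_iff]
  have : (t - s₂) ^ α ≤ (t - s₁) ^ α :=
    Real.rpow_le_rpow (sub_nonneg.2 h₂) (by linarith) hα.le
  exact mul_le_mul_of_nonneg_left this (mul_nonneg hθ hw)

lemma monotone_left (hd : IsTodimDominance d w θ α) (hw : 0 ≤ w) (hθ : 0 ≤ θ)
    (hα : 0 < α) : Monotone (d · t) :=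
  (hd.monotoneOn_Iic hw hθ hα).Iic_union_Ici (hd.monotoneOn_Ici hw hα)

end IsTodimDominance

theorem todim_score_monotone_weak_pareto_general
    (n m : ℕ)
    (xbar : Fin n → Fin m → ℝ)
    (w : Fin m → ℝ) (hw : ∀ j, 0 < w j)
    (d : Fin m → ℝ → ℝ → ℝ)
    (hd_gt : ∀ (j : Fin m) (s t : ℝ), t < s → d j s t = (w j * (s - t)) ^ (0.88 : ℝ))
    (hd_eq : ∀ (j : Fin m) (s t : ℝ), s = t → d j s t = 0)
    (hd_lt : ∀ (j : Fin m) (s t : ℝ), s < t →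
      d j s t = -2.25 * w j * (t - s) ^ (0.88 : ℝ))
    (i1 i2 : Fin n)
    (hpar : ∀ j : Fin m, xbar i2 j ≤ xbar i1 j) :
    (∑ k, ∑ j, d j (xbar i2 j) (xbar k j)) ≤ ∑ k, ∑ j, d j (xbar i1 j) (xbar k j) := by
  have hdom (j : Fin m) : IsTodimDominance (d j) (w j) 2.25 0.88 :=
    ⟨hd_gt j, fun s => hd_eq j s s rfl, hd_lt j⟩
  refine sum_le_sum fun k _ => sum_le_sum fun j _ => ?_
  exact (hdom j).monotone_left (hw j).le (by norm_num) (by norm_num) (hpar j)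

/-- Let `x̄` be an `n × m` matrix of normalized evaluations (`n ≥ 2`,
`m ≥ 1`) and `w_j > 0` weights. With the per-criterion dominance
`d_j(s,t) = (w_j*(s-t))^0.88` if `s > t`, `0` if `s = t`, `-2.25*w_j*(t-s)^0.88` if
`s < t`, the total dominance `D_{i,k} = ∑ j, d_j(x̄^j_i, x̄^j_k)`, and the score
`ŝ_i = ∑ k, D_{i,k}`: if alternative `i1` weakly Pareto dominates `i2`
(`x̄^j_{i1} ≥ x̄^j_{i2}` for all `j`), then `ŝ_{i1} ≥ ŝ_{i2}`. -/
theorem todim_score_monotone_weak_pareto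
    (n m : ℕ) (hn : 2 ≤ n) (hm : 1 ≤ m)
    (xbar : Fin n → Fin m → ℝ)
    (w : Fin m → ℝ) (hw : ∀ j, 0 < w j)
    (d : Fin m → ℝ → ℝ → ℝ)
    (hd_gt : ∀ (j : Fin m) (s t : ℝ), t < s → d j s t = (w j * (s - t)) ^ (0.88 : ℝ))
    (hd_eq : ∀ (j : Fin m) (s t : ℝ), s = t → d j s t = 0)
    (hd_lt : ∀ (j : Fin m) (s t : ℝ), s < t →
      d j s t = -2.25 * w j * (t - s) ^ (0.88 : ℝ))
    (i1 i2 : Fin n)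
    (hpar : ∀ j : Fin m, xbar i2 j ≤ xbar i1 j) :
    (∑ k, ∑ j, d j (xbar i2 j) (xbar k j)) ≤ ∑ k, ∑ j, d j (xbar i1 j) (xbar k j) :=
  todim_score_monotone_weak_pareto_general n m xbar w hw d hd_gt hd_eq hd_lt i1 i2 hpar
end

section
/- Let x̄ be an n×m real matrix of normalized evaluations (n ≥ 2 alternatives, m ≥ 1 criteria) and let w_1, …, w_m > 0 be weights. Define the per-criterion dominance d_j(s,t) = (w_j·(s−t))^{0.88} if s > t, 0 if s = t, and −2.25·w_j·(t−s)^{0.88} if s < t; the total dominance D_{i,k} = Σ_{j=1}^m d_j(x̄^j_i, x̄^j_k); and the score ŝ_i = Σ_{k=1}^n D_{i,k}. If alternative i1 strictly Pareto dominates alternative i2, i.e. x̄^j_{i1} ≥ x̄^j_{i2} for every criterion j with strict inequality for at least one criterion, then ŝ_{i1} > ŝ_{i2}. -/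
/-! Each `d_j(·, t)` is strictly increasing: the loss branch is negative and increasing, it meets
the gain branch at `d_j(t, t) = 0`, and the gain branch is positive and increasing. Replacing the
evaluations of `i2` by those of `i1` therefore raises every summand `d_j(x̄^j_·, x̄^j_k)` weakly,
and the summand with `k = i2` and a criterion of strict dominance strictly. -/

open Finset

theorem strictMono_of_gain_loss_rpow {p c w t : ℝ} {g : ℝ → ℝ} (hp : 0 < p) (hc : 0 < c)
    (hw : 0 < w) (hgt : ∀ s, t < s → g s = (w * (s - t)) ^ p) (heq : g t = 0)
    (hlt : ∀ s, s < t → g s = -c * w * (t - s) ^ p) : StrictMono g := by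
  have hpos : ∀ s, t < s → 0 < g s := fun s hs => by
    rw [hgt s hs]; exact Real.rpow_pos_of_pos (by nlinarith) p
  have hneg : ∀ s, s < t → g s < 0 := fun s hs => by
    rw [hlt s hs]
    have := Real.rpow_pos_of_pos (sub_pos.mpr hs) p
    nlinarith [mul_pos hc hw]
  intro a b hab
  rcases lt_trichotomy b t with hb | rfl | hb
  · rw [hlt a (hab.trans hb), hlt b hb]
    have := Real.rpow_lt_rpow (by linarith) (by linarith : t - b < t - a) hp
    nlinarith [mul_pos hc hw]
  · exact heq ▸ hneg a hab
  · rcases lt_trichotomy a t with ha | rfl | ha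
    · exact (hneg a ha).trans (hpos b hb)
    · exact heq ▸ hpos b hb
    · rw [hgt a ha, hgt b hb]
      exact Real.rpow_lt_rpow (by nlinarith) (by nlinarith) hp

theorem sum_sum_lt_of_strictMono_of_pareto {ι κ α β : Type*} [Fintype ι] [Fintype κ]
    [PartialOrder α] [AddCommMonoid β] [PartialOrder β] [IsOrderedCancelAddMonoid β]
    (d : κ → α → α → β) (hd : ∀ j t, StrictMono (d j · t)) (x : ι → κ → α) (a b : ι)
    (hle : ∀ j, x b j ≤ x a j) (hlt : ∃ j, x b j < x a j) :
    ∑ k, ∑ j, d j (x b j) (x k j) < ∑ k, ∑ j, d j (x a j) (x k j) := by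
  obtain ⟨j₀, hj₀⟩ := hlt
  have hle' : ∀ j t, d j (x b j) t ≤ d j (x a j) t := fun j t => (hd j t).monotone (hle j)
  refine sum_lt_sum (fun k _ => sum_le_sum fun j _ => hle' j _) ⟨b, mem_univ _, ?_⟩
  exact sum_lt_sum (fun j _ => hle' j _) ⟨j₀, mem_univ _, hd j₀ _ hj₀⟩

theorem todim_score_strictMono_strict_pareto_general
    (n m : ℕ)
    (xbar : Fin n → Fin m → ℝ)
    (w : Fin m → ℝ) (hw : ∀ j, 0 < w j)
    (d : Fin m → ℝ → ℝ → ℝ)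
    (hd_gt : ∀ (j : Fin m) (s t : ℝ), t < s → d j s t = (w j * (s - t)) ^ (0.88 : ℝ))
    (hd_eq : ∀ (j : Fin m) (s t : ℝ), s = t → d j s t = 0)
    (hd_lt : ∀ (j : Fin m) (s t : ℝ), s < t →
      d j s t = -2.25 * w j * (t - s) ^ (0.88 : ℝ))
    (i1 i2 : Fin n)
    (hpar : ∀ j : Fin m, xbar i2 j ≤ xbar i1 j)
    (hstrict : ∃ j : Fin m, xbar i2 j < xbar i1 j) :
    (∑ k, ∑ j, d j (xbar i2 j) (xbar k j)) < ∑ k, ∑ j, d j (xbar i1 j) (xbar k j) :=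
  sum_sum_lt_of_strictMono_of_pareto d
    (fun j t => strictMono_of_gain_loss_rpow (by norm_num) (by norm_num) (hw j) (hd_gt j · t)
      (hd_eq j t t rfl) (hd_lt j · t))
    xbar i1 i2 hpar hstrict

/-- Let `x̄` be an `n × m` matrix of normalized evaluations (`n ≥ 2`,
`m ≥ 1`) and `w_j > 0` weights. With the per-criterion dominance
`d_j(s,t) = (w_j*(s-t))^0.88` if `s > t`, `0` if `s = t`, `-2.25*w_j*(t-s)^0.88` if
`s < t`, the total dominance `D_{i,k} = ∑ j, d_j(x̄^j_i, x̄^j_k)`, and the score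
`ŝ_i = ∑ k, D_{i,k}`: if alternative `i1` strictly Pareto dominates `i2`
(`x̄^j_{i1} ≥ x̄^j_{i2}` for all `j`, with strict inequality for some `j`), then
`ŝ_{i1} > ŝ_{i2}`. -/
theorem todim_score_strictMono_strict_pareto
    (n m : ℕ) (hn : 2 ≤ n) (hm : 1 ≤ m)
    (xbar : Fin n → Fin m → ℝ)
    (w : Fin m → ℝ) (hw : ∀ j, 0 < w j)
    (d : Fin m → ℝ → ℝ → ℝ)
    (hd_gt : ∀ (j : Fin m) (s t : ℝ), t < s → d j s t = (w j * (s - t)) ^ (0.88 : ℝ))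
    (hd_eq : ∀ (j : Fin m) (s t : ℝ), s = t → d j s t = 0)
    (hd_lt : ∀ (j : Fin m) (s t : ℝ), s < t →
      d j s t = -2.25 * w j * (t - s) ^ (0.88 : ℝ))
    (i1 i2 : Fin n)
    (hpar : ∀ j : Fin m, xbar i2 j ≤ xbar i1 j)
    (hstrict : ∃ j : Fin m, xbar i2 j < xbar i1 j) :
    (∑ k, ∑ j, d j (xbar i2 j) (xbar k j)) < ∑ k, ∑ j, d j (xbar i1 j) (xbar k j) :=
  todim_score_strictMono_strict_pareto_general n m xbar w hw d hd_gt hd_eq hd_lt i1 i2 hpar hstrict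
end

section
/- Let X be an n×m matrix of strictly positive evaluations (n ≥ 1 alternatives, m ≥ 1 criteria) and let v ≥ 2 be an integer. Form the expanded (n+v)×m evaluation matrix by appending the virtual alternatives â_{1,v}, …, â_{v,v}, and apply the entropy-weight TODIM method to it: normalize each column by its maximum, compute entropy weights w_j = (1 − ê_j)/Σ_{j'} (1 − ê_{j'}) with ê_j = (Σ_i x̄^j_i ln x̄^j_i)/ln(n+v), and compute scores ŝ_i = Σ_k Σ_j d_j(x̄^j_i, x̄^j_k) with d_j(s,t) = (w_j·(s−t))^{0.88} if s > t, 0 if s = t, −2.25·w_j·(t−s)^{0.88} if s < t. Then the top virtual alternative â_{v,v} attains the maximal score: ŝ(â_{v,v}) ≥ ŝ(a) for every alternative a of the expanded set. -/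
/-!
The top virtual alternative has, on every criterion, the column maximum of the original
matrix, and every row of the expanded matrix lies between the column minimum and maximum.
Hence after normalization it dominates every alternative coordinatewise. Since all normalized
values lie in `(0, 1]`, every entropy is nonpositive and every weight nonnegative, which makes
each TODIM dominance degree `d_j(s, t)` monotone in `s`; summing gives the claim.
-/

open Finset Set

namespace TODIM

section Dominance

variable {f : ℝ → ℝ → ℝ} {w α θ : ℝ}

lemma dominance_nonpos_of_le (hw : 0 ≤ w) (hθ : 0 ≤ θ)
    (heq : ∀ s t, s = t → f s t = 0)
    (hlt : ∀ s t, s < t → f s t = -θ * w * (t - s) ^ α) {s t : ℝ} (hst : s ≤ t) :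
    f s t ≤ 0 := by
  rcases hst.lt_or_eq with hst | rfl
  · rw [hlt s t hst, neg_mul, neg_mul, neg_nonpos]
    have := Real.rpow_nonneg (sub_nonneg.2 hst.le) α
    positivity
  · exact (heq s s rfl).le

lemma dominance_nonneg_of_le (hw : 0 ≤ w)
    (hgt : ∀ s t, t < s → f s t = (w * (s - t)) ^ α)
    (heq : ∀ s t, s = t → f s t = 0) {s t : ℝ} (hts : t ≤ s) :
    0 ≤ f s t := by
  rcases hts.lt_or_eq with hts | rfl
  · rw [hgt s t hts]
    exact Real.rpow_nonneg (mul_nonneg hw (sub_nonneg.2 hts.le)) α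
  · exact (heq t t rfl).ge

lemma monotone_dominance (hw : 0 ≤ w) (hα : 0 ≤ α) (hθ : 0 ≤ θ)
    (hgt : ∀ s t, t < s → f s t = (w * (s - t)) ^ α)
    (heq : ∀ s t, s = t → f s t = 0)
    (hlt : ∀ s t, s < t → f s t = -θ * w * (t - s) ^ α) (t : ℝ) :
    Monotone (f · t) := by
  intro s s' hss'
  show f s t ≤ f s' t
  rcases le_or_gt s' t with hs't | hts'
  · rcases hs't.lt_or_eq with hs't | rfl
    · have hst := hss'.trans_lt hs't
      rw [hlt s t hst, hlt s' t hs't]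
      simp only [neg_mul, neg_le_neg_iff]
      gcongr
    · exact (dominance_nonpos_of_le hw hθ heq hlt hss').trans (heq s' s' rfl).ge
  · rcases le_or_gt s t with hst | hts
    · exact (dominance_nonpos_of_le hw hθ heq hlt hst).trans
        (dominance_nonneg_of_le hw hgt heq hts'.le)
    · rw [hgt s t hts, hgt s' t hts']
      gcongr

end Dominance

lemma entropy_nonpos {ι : Type*} [Fintype ι] {x : ι → ℝ} (h₀ : ∀ i, 0 ≤ x i)
    (h₁ : ∀ i, x i ≤ 1) (N : ℕ) :
    (∑ i, x i * Real.log (x i)) / Real.log N ≤ 0 :=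
  div_nonpos_of_nonpos_of_nonneg (sum_nonpos fun i _ => Real.mul_log_nonpos (h₀ i) (h₁ i))
    (Real.log_natCast_nonneg N)

lemma virtual_mem_Icc {a b : ℝ} (hab : a ≤ b) {v : ℕ} (k : Fin v) :
    a + ((k : ℝ) / ((v : ℝ) - 1)) * (b - a) ∈ Icc a b := by
  have hk : (k : ℝ) ≤ (v : ℝ) - 1 := by
    have : (k : ℝ) + 1 ≤ v := by exact_mod_cast k.isLt
    linarith
  have hv₁ : 0 ≤ (v : ℝ) - 1 := k.val.cast_nonneg.trans hk
  have hθ₀ : 0 ≤ (k : ℝ) / ((v : ℝ) - 1) := div_nonneg k.val.cast_nonneg hv₁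
  have hθ₁ : (k : ℝ) / ((v : ℝ) - 1) ≤ 1 := div_le_one_of_le₀ hk hv₁
  constructor <;> nlinarith

lemma virtual_eq_right {v : ℕ} (hv : 2 ≤ v) {k : Fin v} (hk : (k : ℕ) = v - 1) (a b : ℝ) :
    a + ((k : ℝ) / ((v : ℝ) - 1)) * (b - a) = b := by
  have hv₁ : (v : ℝ) - 1 ≠ 0 := by
    have : (2 : ℝ) ≤ v := by exact_mod_cast hv
    linarith
  rw [hk, Nat.cast_sub (by omega), Nat.cast_one, div_self hv₁]
  ring

end TODIM

open TODIM

/-- Let `X` be an `n × m` matrix of strictly positive evaluations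
(`n ≥ 1`, `m ≥ 1`) and `v ≥ 2`. Form the expanded `(n+v) × m` matrix `Y` by appending
the virtual alternatives (the virtual index `d : Fin v` encodes position `d+1`, with
evaluation `xmin j + ((d-1)/(v-1)) * (xmax j - xmin j)` on criterion `j`), and apply the
entropy-weight TODIM method to `Y`: normalize each column by its maximum, compute entropy
weights `w_j = (1 - ê_j)/∑ j', (1 - ê_{j'})` with
`ê_j = (∑ i, x̄^j_i ln x̄^j_i)/ln(n+v)`, and compute scores
`ŝ_i = ∑ k, ∑ j, d_j(x̄^j_i, x̄^j_k)` with `d_j(s,t) = (w_j*(s-t))^0.88` if `s > t`,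
`0` if `s = t`, `-2.25*w_j*(t-s)^0.88` if `s < t`. Then the top virtual alternative
`â_{v,v}` attains the maximal score. -/
theorem top_virtual_alternative_maximal_score
    (n m v : ℕ) (hv : 2 ≤ v)
    (X : Fin n → Fin m → ℝ) (hXpos : ∀ i j, 0 < X i j)
    (xmax xmin : Fin m → ℝ)
    (hmax : ∀ j, IsGreatest (Set.range fun i => X i j) (xmax j))
    (hmin : ∀ j, IsLeast (Set.range fun i => X i j) (xmin j))
    (Y : Fin (n + v) → Fin m → ℝ)
    (hYorig : ∀ (i : Fin n) (j : Fin m), Y (Fin.castAdd v i) j = X i j)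
    (hYvirt : ∀ (d : Fin v) (j : Fin m),
      Y (Fin.natAdd n d) j = xmin j + ((d : ℝ) / ((v : ℝ) - 1)) * (xmax j - xmin j))
    (ymax : Fin m → ℝ)
    (hymax : ∀ j, IsGreatest (Set.range fun i => Y i j) (ymax j))
    (xbar : Fin (n + v) → Fin m → ℝ)
    (hxbar : ∀ i j, xbar i j = Y i j / ymax j)
    (e : Fin m → ℝ)
    (he : ∀ j, e j =
      (∑ i, xbar i j * Real.log (xbar i j)) / Real.log ((n + v : ℕ) : ℝ))
    (w : Fin m → ℝ)
    (hw : ∀ j, w j = (1 - e j) / ∑ j', (1 - e j'))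
    (d : Fin m → ℝ → ℝ → ℝ)
    (hd_gt : ∀ (j : Fin m) (s t : ℝ), t < s → d j s t = (w j * (s - t)) ^ (0.88 : ℝ))
    (hd_eq : ∀ (j : Fin m) (s t : ℝ), s = t → d j s t = 0)
    (hd_lt : ∀ (j : Fin m) (s t : ℝ), s < t →
      d j s t = -2.25 * w j * (t - s) ^ (0.88 : ℝ))
    (score : Fin (n + v) → ℝ)
    (hscore : ∀ i, score i = ∑ k, ∑ j, d j (xbar i j) (xbar k j)) :
    ∀ a : Fin (n + v), score a ≤ score (Fin.natAdd n ⟨v - 1, by omega⟩) := by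
  intro a
  set top : Fin (n + v) := Fin.natAdd n ⟨v - 1, by omega⟩
  have hX_mem : ∀ i j, X i j ∈ Icc (xmin j) (xmax j) := fun i j =>
    ⟨(hmin j).2 ⟨i, rfl⟩, (hmax j).2 ⟨i, rfl⟩⟩
  have hxmin_pos : ∀ j, 0 < xmin j := fun j => by
    obtain ⟨i, hi⟩ := (hmin j).1
    exact hi ▸ hXpos i j
  have hY_mem : ∀ i j, Y i j ∈ Icc (xmin j) (xmax j) := fun i j => by
    induction i using Fin.addCases with
    | left i => exact hYorig i j ▸ hX_mem i j
    | right k => exact hYvirt k j ▸ virtual_mem_Icc ((hmin j).2 (hmax j).1) k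
  have hY_top : ∀ j, Y top j = xmax j := fun j => (hYvirt _ j).trans (virtual_eq_right hv rfl _ _)
  have hY_pos : ∀ i j, 0 < Y i j := fun i j => (hxmin_pos j).trans_le (hY_mem i j).1
  have hymax_pos : ∀ j, 0 < ymax j := fun j =>
    (hY_pos top j).trans_le ((hymax j).2 ⟨top, rfl⟩)
  have hxbar_nonneg : ∀ i j, 0 ≤ xbar i j := fun i j =>
    hxbar i j ▸ div_nonneg (hY_pos i j).le (hymax_pos j).le
  have hxbar_le_one : ∀ i j, xbar i j ≤ 1 := fun i j =>
    hxbar i j ▸ div_le_one_of_le₀ ((hymax j).2 ⟨i, rfl⟩) (hymax_pos j).le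
  have hxbar_le_top : ∀ i j, xbar i j ≤ xbar top j := fun i j => by
    rw [hxbar, hxbar, hY_top]
    exact div_le_div_of_nonneg_right (hY_mem i j).2 (hymax_pos j).le
  have he_nonpos : ∀ j, e j ≤ 0 := fun j =>
    he j ▸ entropy_nonpos (hxbar_nonneg · j) (hxbar_le_one · j) _
  have hw_nonneg : ∀ j, 0 ≤ w j := fun j => hw j ▸
    div_nonneg (by linarith [he_nonpos j]) (sum_nonneg fun j' _ => by linarith [he_nonpos j'])
  rw [hscore, hscore]
  exact sum_le_sum fun k _ => sum_le_sum fun j _ =>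
    monotone_dominance (hw_nonneg j) (by norm_num) (by norm_num) (hd_gt j) (hd_eq j) (hd_lt j) _
      (hxbar_le_top a j)
end

section
/- Let x̄ be an n×m real matrix of normalized evaluations, let w_1, …, w_m > 0 be weights, and define the total dominance D_{i,k} = Σ_{j=1}^m d_j(x̄^j_i, x̄^j_k) with d_j(s,t) = (w_j·(s−t))^{0.88} if s > t, 0 if s = t, −2.25·w_j·(t−s)^{0.88} if s < t. If alternative i1 weakly Pareto dominates alternative i3, i.e. x̄^j_{i1} ≥ x̄^j_{i3} for every criterion j, then for every alternative i2, D_{i1,i2} ≥ D_{i3,i2}. -/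
/-!
On a fixed criterion, `s ↦ d(s, t)` is the prospect-theory value function applied to `s - t`:
with exponent `α > 0` the gain branch `(w (s - t))^α` and the loss branch `-θ w (t - s)^α` both
vanish at `s = t`, so each extends to its closed half-line, is monotone there, and the two
pieces glue to a monotone function. Summing over criteria gives the weak Pareto monotonicity.
-/

namespace Todim

variable {w θ α : ℝ} {d : ℝ → ℝ → ℝ}

lemma eq_gain_of_le (hα : α ≠ 0)
    (hgt : ∀ s t, t < s → d s t = (w * (s - t)) ^ α) (heq : ∀ s t, s = t → d s t = 0)
    {s t : ℝ} (hts : t ≤ s) : d s t = (w * (s - t)) ^ α := by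
  rcases hts.lt_or_eq with hts | rfl
  · exact hgt s t hts
  · rw [heq t t rfl, sub_self, mul_zero, Real.zero_rpow hα]

lemma eq_loss_of_le (hα : α ≠ 0)
    (hlt : ∀ s t, s < t → d s t = -θ * w * (t - s) ^ α) (heq : ∀ s t, s = t → d s t = 0)
    {s t : ℝ} (hst : s ≤ t) : d s t = -θ * w * (t - s) ^ α := by
  rcases hst.lt_or_eq with hst | rfl
  · exact hlt s t hst
  · rw [heq s s rfl, sub_self, Real.zero_rpow hα, mul_zero]

lemma monotone_of_gain_loss (hw : 0 ≤ w) (hθ : 0 ≤ θ) (hα : 0 < α)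
    (hgt : ∀ s t, t < s → d s t = (w * (s - t)) ^ α) (heq : ∀ s t, s = t → d s t = 0)
    (hlt : ∀ s t, s < t → d s t = -θ * w * (t - s) ^ α) (t : ℝ) :
    Monotone (d · t) := by
  refine MonotoneOn.Iic_union_Ici (a := t) ?_ ?_
  · intro s (hs : s ≤ t) s' (hs' : s' ≤ t) hss'
    show d s t ≤ d s' t
    rw [eq_loss_of_le hα.ne' hlt heq hs, eq_loss_of_le hα.ne' hlt heq hs']
    simp only [neg_mul, neg_le_neg_iff]
    have : 0 ≤ t - s' := sub_nonneg.mpr hs'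
    gcongr
  · intro s (hs : t ≤ s) s' (hs' : t ≤ s') hss'
    show d s t ≤ d s' t
    rw [eq_gain_of_le hα.ne' hgt heq hs, eq_gain_of_le hα.ne' hgt heq hs']
    have : 0 ≤ s - t := sub_nonneg.mpr hs
    gcongr

end Todim

/-- Let `x̄` be an `n × m` matrix of normalized evaluations, `w_j > 0`
weights, and `D_{i,k} = ∑ j, d_j(x̄^j_i, x̄^j_k)` the total dominance with
`d_j(s,t) = (w_j*(s-t))^0.88` if `s > t`, `0` if `s = t`, `-2.25*w_j*(t-s)^0.88` if
`s < t`. If alternative `i1` weakly Pareto dominates `i3` (`x̄^j_{i1} ≥ x̄^j_{i3}` for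
all `j`), then for every alternative `i2`, `D_{i1,i2} ≥ D_{i3,i2}`. -/
theorem todim_total_dominance_monotone_weak_pareto
    (n m : ℕ)
    (xbar : Fin n → Fin m → ℝ)
    (w : Fin m → ℝ) (hw : ∀ j, 0 < w j)
    (d : Fin m → ℝ → ℝ → ℝ)
    (hd_gt : ∀ (j : Fin m) (s t : ℝ), t < s → d j s t = (w j * (s - t)) ^ (0.88 : ℝ))
    (hd_eq : ∀ (j : Fin m) (s t : ℝ), s = t → d j s t = 0)
    (hd_lt : ∀ (j : Fin m) (s t : ℝ), s < t →
      d j s t = -2.25 * w j * (t - s) ^ (0.88 : ℝ))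
    (i1 i3 : Fin n)
    (hpar : ∀ j : Fin m, xbar i3 j ≤ xbar i1 j) :
    ∀ i2 : Fin n,
      (∑ j, d j (xbar i3 j) (xbar i2 j)) ≤ ∑ j, d j (xbar i1 j) (xbar i2 j) := by
  intro i2
  refine Finset.sum_le_sum fun j _ => ?_
  exact Todim.monotone_of_gain_loss (hw j).le (by norm_num) (by norm_num)
    (hd_gt j) (hd_eq j) (hd_lt j) (xbar i2 j) (hpar j)
end
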